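/- Let K be a non-degenerate d-simplex in R^d with minimum height a_K > 0 (minimum over vertices of the distance from the vertex to the opposite facet). Then the spectral norm of the inverse edge matrix satisfies ||E_K^{-1}||_2 ≤ √d / a_K. -/

import Mathlib

/- The rows `gᵢ` of `E⁻¹` are the gradients of the barycentric coordinates: `⟪gᵢ, x_{i+1} - x₀⟫ = 1`
and `gᵢ` is orthogonal to the facet opposite `x_{i+1}`, which in dimension `d` is the whole
hyperplane `{y | ⟪gᵢ, y - x₀⟫ = 0}`. The foot of the altitude from `x_{i+1}` is therefore
`x_{i+1} - gᵢ / ‖gᵢ‖²`, so the `i`-th height is `1 / ‖gᵢ‖` and every row of `E⁻¹` has norm at most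
`1 / a_K`. A matrix whose `d` rows have norm at most `C` has spectral norm at most `√d · C`,
by Cauchy–Schwarz row by row. -/

open Matrix

/-- The spectral norm (operator 2-norm) of a real `d × d` matrix. -/
noncomputable def specNorm {d : ℕ} (M : Matrix (Fin d) (Fin d) ℝ) : ℝ :=
  ‖LinearMap.toContinuousLinearMap (Matrix.toEuclideanLin M)‖

open WithLp (toLp ofLp)

theorem specNorm_le_sqrt_mul_of_norm_row_le {d : ℕ} (M : Matrix (Fin d) (Fin d) ℝ) {C : ℝ}
    (hC : 0 ≤ C) (hM : ∀ i, ‖toLp 2 (M i)‖ ≤ C) : specNorm M ≤ Real.sqrt d * C := by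
  refine ContinuousLinearMap.opNorm_le_bound _ (by positivity) fun v => ?_
  have hrow : ∀ i, (M *ᵥ ofLp v) i ^ 2 ≤ (C * ‖v‖) ^ 2 := fun i =>
    calc (M *ᵥ ofLp v) i ^ 2 = inner ℝ v (toLp 2 (M i)) ^ 2 := rfl
      _ ≤ (‖toLp 2 (M i)‖ * ‖v‖) ^ 2 := by
        rw [real_inner_comm, ← sq_abs]
        exact pow_le_pow_left₀ (abs_nonneg _) (abs_real_inner_le_norm _ _) 2
      _ ≤ (C * ‖v‖) ^ 2 := by gcongr; exact hM i
  refine pow_le_pow_iff_left₀ (norm_nonneg _) (by positivity) two_ne_zero |>.mp ?_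
  calc ‖toEuclideanLin M v‖ ^ 2 = ∑ i, (M *ᵥ ofLp v) i ^ 2 := EuclideanSpace.real_norm_sq_eq _
    _ ≤ ∑ _i : Fin d, (C * ‖v‖) ^ 2 := Finset.sum_le_sum fun i _ => hrow i
    _ = (Real.sqrt d * C * ‖v‖) ^ 2 := by
      rw [Finset.sum_const, Finset.card_univ, Fintype.card_fin, nsmul_eq_mul, mul_pow, mul_pow,
        mul_pow, Real.sq_sqrt d.cast_nonneg]
      ring

theorem infDist_le_inv_norm_of_hyperplane_subset {V : Type*} [NormedAddCommGroup V]
    [InnerProductSpace ℝ V] {S : Set V} {g x₀ x : V}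
    (hS : ∀ y, inner ℝ g (y - x₀) = 0 → y ∈ S) (hx : inner ℝ g (x - x₀) = 1) :
    Metric.infDist x S ≤ ‖g‖⁻¹ := by
  have hg : g ≠ 0 := by rintro rfl; simp at hx
  have hg2 : ‖g‖ ^ 2 ≠ 0 := by positivity
  have hfoot : x - (‖g‖ ^ 2)⁻¹ • g ∈ S := hS _ <| by
    rw [sub_right_comm, inner_sub_right, inner_smul_right, real_inner_self_eq_norm_sq, hx,
      inv_mul_cancel₀ hg2, sub_self]
  calc Metric.infDist x S ≤ dist x (x - (‖g‖ ^ 2)⁻¹ • g) := Metric.infDist_le_dist_of_mem hfoot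
    _ = ‖g‖⁻¹ := by
      rw [dist_eq_norm, sub_sub_cancel, norm_smul, norm_inv, norm_pow, norm_norm, pow_two,
        mul_inv, mul_assoc, inv_mul_cancel₀ (norm_ne_zero_iff.mpr hg), mul_one]

section EdgeMatrix

variable {d : ℕ} {x : Fin (d + 1) → EuclideanSpace ℝ (Fin d)} {E : Matrix (Fin d) (Fin d) ℝ}

theorem sum_smul_edge_eq_toLp_mulVec (hE : ∀ r c, E r c = (x c.succ - x 0) r) (c : Fin d → ℝ) :
    ∑ j, c j • (x j.succ - x 0) = toLp 2 (E *ᵥ c) := by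
  ext r
  simp [mulVec, dotProduct, hE, mul_comm]

theorem inner_inv_row_edge_self (hE : ∀ r c, E r c = (x c.succ - x 0) r) (hE₀ : IsUnit E.det)
    (i : Fin d) : inner ℝ (toLp 2 (E⁻¹ i)) (x i.succ - x 0) = 1 := by
  have h := congrFun (congrFun (nonsing_inv_mul E hE₀) i) i
  simpa [mul_apply, hE, dotProduct, mul_comm, real_inner_comm,
    EuclideanSpace.inner_eq_star_dotProduct] using h

theorem mem_affineSpan_facet_of_inner_inv_row_eq_zero (hE : ∀ r c, E r c = (x c.succ - x 0) r)
    (hE₀ : IsUnit E.det) (i : Fin d) {y : EuclideanSpace ℝ (Fin d)}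
    (hy : inner ℝ (toLp 2 (E⁻¹ i)) (y - x 0) = 0) : y ∈ affineSpan ℝ (x '' {i.succ}ᶜ) := by
  set c := E⁻¹ *ᵥ ofLp (y - x 0)
  have hci : c i = 0 := by
    rw [← hy, real_inner_comm]
    rfl
  have hmem : ∀ j : Fin (d + 1), j ≠ i.succ → x j ∈ affineSpan ℝ (x '' {i.succ}ᶜ) :=
    fun j hj => subset_affineSpan ℝ _ ⟨j, hj, rfl⟩
  have hdir : y - x 0 ∈ (affineSpan ℝ (x '' {i.succ}ᶜ)).direction := by
    have hy' : y - x 0 = ∑ j, c j • (x j.succ - x 0) := by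
      rw [sum_smul_edge_eq_toLp_mulVec hE, mulVec_mulVec, mul_nonsing_inv E hE₀, one_mulVec,
        WithLp.toLp_ofLp]
    rw [hy']
    refine Submodule.sum_mem _ fun j _ => ?_
    rcases eq_or_ne j i with rfl | hj
    · rw [hci, zero_smul]
      exact Submodule.zero_mem _
    · exact Submodule.smul_mem _ _ <| AffineSubspace.vsub_mem_direction
        (hmem _ (Fin.succ_injective d |>.ne hj)) (hmem 0 (Fin.succ_ne_zero i).symm)
  simpa using AffineSubspace.vadd_mem_of_mem_direction hdir (hmem 0 (Fin.succ_ne_zero i).symm)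

theorem norm_inv_row_le_inv_of_le_infDist (hE : ∀ r c, E r c = (x c.succ - x 0) r) (i : Fin d)
    {a : ℝ} (ha : 0 < a) (hle : a ≤ Metric.infDist (x i.succ) (affineSpan ℝ (x '' {i.succ}ᶜ))) :
    ‖toLp 2 (E⁻¹ i)‖ ≤ a⁻¹ := by
  by_cases hE₀ : IsUnit E.det
  · have hg : 0 < ‖toLp 2 (E⁻¹ i)‖ := norm_pos_iff.mpr <| by
      rintro hg
      simpa [hg] using inner_inv_row_edge_self hE hE₀ i
    refine (le_inv_comm₀ ha hg).mp <| hle.trans ?_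
    exact infDist_le_inv_norm_of_hyperplane_subset
      (fun y hy => mem_affineSpan_facet_of_inner_inv_row_eq_zero hE hE₀ i hy)
      (inner_inv_row_edge_self hE hE₀ i)
  · -- a singular `E` has `E⁻¹ = 0` by Mathlib's convention
    rw [nonsing_inv_apply_not_isUnit E hE₀]
    change ‖toLp 2 (0 : Fin d → ℝ)‖ ≤ a⁻¹
    rw [WithLp.toLp_zero, norm_zero]
    positivity

end EdgeMatrix

theorem inverse_edge_matrix_spectral_norm_bound_general
    (d : ℕ) (x : Fin (d + 1) → EuclideanSpace ℝ (Fin d))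
    (E : Matrix (Fin d) (Fin d) ℝ)
    (hE : ∀ r c, E r c = (x c.succ - x 0) r)
    (aK : ℝ)
    (haK : aK = Finset.univ.inf' Finset.univ_nonempty
      (fun i => Metric.infDist (x i) (affineSpan ℝ (x '' {i}ᶜ) : Set (EuclideanSpace ℝ (Fin d)))))
    (haKpos : 0 < aK) :
    specNorm E⁻¹ ≤ Real.sqrt d / aK := by
  have hheight (i : Fin d) : aK ≤ Metric.infDist (x i.succ) (affineSpan ℝ (x '' {i.succ}ᶜ)) :=
    haK ▸ Finset.inf'_le _ (Finset.mem_univ i.succ)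
  rw [div_eq_mul_inv]
  exact specNorm_le_sqrt_mul_of_norm_row_le _ (inv_nonneg.mpr haKpos.le) fun i =>
    norm_inv_row_le_inv_of_le_infDist hE i haKpos (hheight i)

/-- Let `K` be a non-degenerate `d`-simplex in `ℝ^d` with minimum height
`aK > 0` (minimum over vertices of the distance from the vertex to the affine span of
the other vertices). Then the spectral norm of the inverse edge matrix satisfies
`‖E⁻¹‖₂ ≤ √d / aK`. -/
theorem inverse_edge_matrix_spectral_norm_bound
    (d : ℕ) (x : Fin (d + 1) → EuclideanSpace ℝ (Fin d))
    (hx : AffineIndependent ℝ x)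
    (E : Matrix (Fin d) (Fin d) ℝ)
    (hE : ∀ r c, E r c = (x c.succ - x 0) r)
    (aK : ℝ)
    (haK : aK = Finset.univ.inf' Finset.univ_nonempty
      (fun i => Metric.infDist (x i) (affineSpan ℝ (x '' {i}ᶜ) : Set (EuclideanSpace ℝ (Fin d)))))
    (haKpos : 0 < aK) :
    specNorm E⁻¹ ≤ Real.sqrt d / aK :=
  inverse_edge_matrix_spectral_norm_bound_general d x E hE aK haK haKpos
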